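/- (Lemma 2.1(4)) Assume conditions A1–A5 hold for (S̄, η̄). If μ̄ is any strongly club-guessing ladder system, then dom(μ̄) is S̄-small. -/

import Mathlib

open Set

/-- ω₁, the first uncountable ordinal. -/
noncomputable def omegaOne : Ordinal := (Cardinal.aleph 1).ord

/-- ω₂, the second uncountable ordinal. -/
noncomputable def omegaTwo : Ordinal := (Cardinal.aleph 2).ord

/-- The set of countable ordinals, i.e. ω₁ viewed as a set of ordinals. -/
def omegaOneSet : Set Ordinal := {o | o < omegaOne}

/-- `A ⊆* B` iff `A \ B` is finite. -/
def AlmostSubset (A B : Set Ordinal) : Prop := (A \ B).Finite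

/-- `A =* B` iff `A ⊆* B` and `B ⊆* A`. -/
def AlmostEq (A B : Set Ordinal) : Prop := AlmostSubset A B ∧ AlmostSubset B A

/-- A club subset of ω₁: a set of countable ordinals, unbounded in ω₁ and
closed (every nonzero δ < ω₁ which is a limit of members is a member). -/
def IsClubOmegaOne (C : Set Ordinal) : Prop :=
  C ⊆ omegaOneSet ∧
  (∀ a < omegaOne, ∃ b ∈ C, a < b) ∧
  (∀ δ, δ ≠ 0 → δ < omegaOne → (∀ a < δ, ∃ b ∈ C, a < b ∧ b < δ) → δ ∈ C)

/-- A stationary subset of ω₁: one meeting every club. -/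
def Stationary (S : Set Ordinal) : Prop := ∀ C, IsClubOmegaOne C → (S ∩ C).Nonempty

/-- A ladder system: for each δ in the domain (a set of countable limit ordinals),
a strictly increasing ω-sequence cofinal in δ. -/
structure Ladder where
  dom : Set Ordinal
  toFun : Ordinal → ℕ → Ordinal
  dom_lt : ∀ δ ∈ dom, δ < omegaOne
  mono : ∀ δ ∈ dom, StrictMono (toFun δ)
  lt : ∀ δ ∈ dom, ∀ n, toFun δ n < δ
  cofinal : ∀ δ ∈ dom, ∀ a < δ, ∃ n, a < toFun δ n

/-- `[η_δ]`, the range of the ladder at δ. -/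
def Ladder.lad (η : Ladder) (δ : Ordinal) : Set Ordinal := Set.range (η.toFun δ)

/-- The restriction `η̄↾A`, with domain `dom(η̄) ∩ A`. -/
def Ladder.restrict (η : Ladder) (A : Set Ordinal) : Ladder where
  dom := η.dom ∩ A
  toFun := η.toFun
  dom_lt := fun δ h => η.dom_lt δ h.1
  mono := fun δ h => η.mono δ h.1
  lt := fun δ h => η.lt δ h.1
  cofinal := fun δ h => η.cofinal δ h.1

/-- η̄ is club-guessing iff every club C has some δ ∈ dom(η̄) with `[η_δ] ⊆* C`. -/
def ClubGuessing (η : Ladder) : Prop :=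
  ∀ C, IsClubOmegaOne C → ∃ δ ∈ η.dom, AlmostSubset (η.lad δ) C

/-- η̄ is strongly club-guessing iff for every club C there is a club D with
`[η_δ] ⊆* C` for all δ ∈ D ∩ dom(η̄). -/
def StronglyGuessing (η : Ladder) : Prop :=
  ∀ C, IsClubOmegaOne C → ∃ D, IsClubOmegaOne D ∧ ∀ δ ∈ D ∩ η.dom, AlmostSubset (η.lad δ) C

/-- A club C avoids η̄ iff `[η_δ] ∩ C` is finite for every δ ∈ dom(η̄) outside
some non-stationary set. -/
def Avoids (C : Set Ordinal) (η : Ladder) : Prop :=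
  IsClubOmegaOne C ∧ ∃ N : Set Ordinal, ¬ Stationary N ∧
    ∀ δ ∈ η.dom, δ ∉ N → (η.lad δ ∩ C).Finite

/-- η̄ is avoidable iff some club avoids it. -/
def Avoidable (η : Ladder) : Prop := ∃ C, Avoids C η

/-- A set S ⊆ ω₁ is avoidable iff every ladder system over S is avoidable. -/
def AvoidableSet (S : Set Ordinal) : Prop := ∀ η : Ladder, η.dom ⊆ S → Avoidable η

/-- Two ladders are almost disjoint iff for some club C, `[η_δ] ∩ [μ_δ]` is finite
for every δ ∈ C ∩ dom(η̄) ∩ dom(μ̄). -/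
def AlmostDisjoint (η μ : Ladder) : Prop :=
  ∃ C, IsClubOmegaOne C ∧ ∀ δ ∈ C ∩ (η.dom ∩ μ.dom), (η.lad δ ∩ μ.lad δ).Finite

/-- `η̄ ⊴ μ̄` : η̄ is a subladder of μ̄. -/
def Subladder (η μ : Ladder) : Prop :=
  ∃ C, IsClubOmegaOne C ∧ C ∩ η.dom ⊆ μ.dom ∧
    ∀ δ ∈ C ∩ η.dom, AlmostSubset (η.lad δ) (μ.lad δ)

/-- η̄ is maximal for X iff dom(η̄) ⊆ X, η̄ is strongly club-guessing, and every
ladder system over X almost disjoint from η̄ is avoidable. -/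
def LadderMaximalFor (η : Ladder) (X : Set Ordinal) : Prop :=
  η.dom ⊆ X ∧ StronglyGuessing η ∧
    ∀ μ : Ladder, μ.dom ⊆ X → AlmostDisjoint μ η → Avoidable μ

/-- The diagonal union `∇_ξ A_ξ = {α < ω₁ : ∃ ξ < α, α ∈ A_ξ}`. -/
def diagUnion (A : Ordinal → Set Ordinal) : Set Ordinal :=
  {α | α < omegaOne ∧ ∃ ξ < α, α ∈ A ξ}

/-- H is S̄-small iff the set of i < ω₂ with H ∩ S_i stationary has size ≤ ℵ₁. -/
def SSmall (S : Ordinal → Set Ordinal) (H : Set Ordinal) : Prop :=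
  Cardinal.mk {i : Ordinal // i < omegaTwo ∧ Stationary (H ∩ S i)} ≤
    Cardinal.lift.{1,0} (Cardinal.aleph 1 : Cardinal.{0})

/-- Conditions A1–A5 for (S̄, η̄), with χ the family of maximal ladders from A3. -/
def CondA (S : Ordinal → Set Ordinal) (η : Ladder) (χ : Ordinal → Ladder) : Prop :=
  (∀ i < omegaTwo, S i ⊆ omegaOneSet ∧ Stationary (S i)) ∧
  (∀ i < omegaTwo, ∀ j < omegaTwo, i ≠ j → ¬ Stationary (S i ∩ S j)) ∧
  -- A1
  (∀ i < omegaTwo, S i ⊆ η.dom) ∧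
  -- A2
  (∀ μ : Ladder, AlmostDisjoint μ η → Avoidable μ) ∧
  -- A3
  (∀ i < omegaTwo, (χ i).dom = S i ∧ LadderMaximalFor (χ i) (S i)) ∧
  -- A4
  (∀ X : Set Ordinal, X ⊆ omegaOneSet →
      (∀ i < omegaTwo, ¬ Stationary (X ∩ S i)) → AvoidableSet X) ∧
  -- A5
  (∀ X : Set Ordinal, X ⊆ omegaOneSet → ¬ SSmall S X →
      ∀ ρ : Ladder, ρ.dom = X → Subladder ρ η →
        ∃ i, i < omegaTwo ∧ S i ⊆ X ∧ Subladder (χ i) ρ)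

/- ### Auxiliary lemmas -/

lemma omegaOne_isLimit : Order.IsSuccLimit omegaOne :=
  Cardinal.isSuccLimit_ord (Cardinal.aleph0_le_aleph 1)

lemma isClub_omegaOneSet : IsClubOmegaOne omegaOneSet :=
  ⟨fun _ hx => hx,
   fun a ha => ⟨Order.succ a, omegaOne_isLimit.succ_lt ha, Order.lt_succ a⟩,
   fun _ _ hδ _ => hδ⟩

lemma IsClubOmegaOne.inter {C D : Set Ordinal} (hC : IsClubOmegaOne C) (hD : IsClubOmegaOne D) :
    IsClubOmegaOne (C ∩ D) := by
  obtain ⟨hCs, hCu, hCc⟩ := hC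
  obtain ⟨hDs, hDu, hDc⟩ := hD
  refine ⟨fun x hx => hCs hx.1, ?_, ?_⟩
  · intro a ha
    choose gC hgC1 hgC2 using hCu
    choose gD hgD1 hgD2 using hDu
    let F : {x : Ordinal // x < omegaOne} → {x : Ordinal // x < omegaOne} :=
      fun x => ⟨gD (gC x.1 x.2) (hCs (hgC1 x.1 x.2)),
        hDs (hgD1 (gC x.1 x.2) (hCs (hgC1 x.1 x.2)))⟩
    let f : ℕ → Ordinal := fun n => (F^[n] ⟨a, ha⟩).1
    have hflt : ∀ n, f n < omegaOne := fun n => (F^[n] ⟨a, ha⟩).2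
    have hstep : ∀ n, f (n + 1) =
        gD (gC (f n) (hflt n)) (hCs (hgC1 (f n) (hflt n))) := by
      intro n
      show (F^[n + 1] ⟨a, ha⟩).1 = _
      rw [Function.iterate_succ_apply']
    have hmono : ∀ n, f n < f (n + 1) := by
      intro n
      rw [hstep n]
      exact lt_trans (hgC2 (f n) (hflt n)) (hgD2 _ _)
    have hmono' : StrictMono f := strictMono_nat_of_lt_succ hmono
    have hfD : ∀ n, f (n + 1) ∈ D := by
      intro n; rw [hstep n]; exact hgD1 _ _
    have hδlt : (⨆ n, f n) < omegaOne := by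
      have hcof : Cardinal.lift (Cardinal.mk ℕ) < omegaOne.cof := by
        rw [show omegaOne.cof = (Cardinal.aleph 1).ord.cof from rfl,
          Cardinal.isRegular_aleph_one.cof_eq, Cardinal.mk_nat, Cardinal.lift_aleph0]
        exact Cardinal.aleph0_lt_aleph_one
      exact Ordinal.iSup_lt_ord_lift hcof hflt
    set δ := ⨆ n, f n with hδdef
    have hle : ∀ n, f n < δ := by
      intro n
      exact lt_of_lt_of_le (hmono n) (Ordinal.le_iSup f (n + 1))
    have haδ : a < δ := by
      have : f 0 = a := rfl
      rw [← this]; exact hle 0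
    have hlt : ∀ b < δ, ∃ n, b < f n := by
      intro b hb
      exact (Ordinal.lt_iSup_iff).1 hb
    have hδ0 : δ ≠ 0 := by
      intro h
      exact absurd haδ (by simp [h])
    have hδC : δ ∈ C := by
      apply hCc δ hδ0 hδlt
      intro b hb
      obtain ⟨n, hn⟩ := hlt b hb
      refine ⟨gC (f n) (hflt n), hgC1 _ _, lt_trans hn (hgC2 _ _), ?_⟩
      calc gC (f n) (hflt n) < f (n + 1) := by rw [hstep n]; exact hgD2 _ _
        _ < δ := hle (n + 1)
    have hδD : δ ∈ D := by
      apply hDc δ hδ0 hδlt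
      intro b hb
      obtain ⟨n, hn⟩ := hlt b hb
      exact ⟨f (n + 1), hfD n, lt_trans hn (hmono n), hle (n + 1)⟩
    exact ⟨δ, ⟨hδC, hδD⟩, haδ⟩
  · intro δ h0 hδ hcl
    refine ⟨hCc δ h0 hδ ?_, hDc δ h0 hδ ?_⟩ <;> intro a ha <;>
      obtain ⟨b, hb, hab, hbδ⟩ := hcl a ha
    exacts [⟨b, hb.1, hab, hbδ⟩, ⟨b, hb.2, hab, hbδ⟩]

lemma not_stationary_iff {N : Set Ordinal} (h : ¬ Stationary N) :
    ∃ E, IsClubOmegaOne E ∧ N ∩ E = ∅ := by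
  unfold Stationary at h
  push_neg at h
  obtain ⟨E, hE, hN⟩ := h
  exact ⟨E, hE, hN⟩

lemma Ladder.lad_infinite (η : Ladder) {δ : Ordinal} (hδ : δ ∈ η.dom) :
    (η.lad δ).Infinite :=
  Set.infinite_range_of_injective (η.mono δ hδ).injective

lemma StronglyGuessing.of_sub {μ : Ladder} (hμ : StronglyGuessing μ) (ν : Ladder)
    (hdom : ν.dom ⊆ μ.dom) (hlad : ∀ δ ∈ ν.dom, ν.lad δ ⊆ μ.lad δ) :
    StronglyGuessing ν := by
  intro C hC
  obtain ⟨D, hD, h⟩ := hμ C hC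
  exact ⟨D, hD, fun δ hδ =>
    (h δ ⟨hδ.1, hdom hδ.2⟩).subset (diff_subset_diff_left (hlad δ hδ.2))⟩

lemma StronglyGuessing.not_stationary {ν : Ladder} (hg : StronglyGuessing ν)
    (hav : Avoidable ν) : ¬ Stationary ν.dom := by
  intro hst
  obtain ⟨C, hC, N, hN, hfin⟩ := hav
  obtain ⟨D, hD, hDg⟩ := hg C hC
  obtain ⟨E, hE, hNE⟩ := not_stationary_iff hN
  obtain ⟨δ, hδdom, hδDE⟩ := hst (D ∩ E) (hD.inter hE)
  have h1 : (ν.lad δ \ C).Finite := hDg δ ⟨hδDE.1, hδdom⟩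
  have h2 : (ν.lad δ ∩ C).Finite := hfin δ hδdom
    (fun hmem => (eq_empty_iff_forall_notMem.1 hNE δ) ⟨hmem, hδDE.2⟩)
  have hsub : ν.lad δ ⊆ (ν.lad δ \ C) ∪ (ν.lad δ ∩ C) := by
    intro x hx
    by_cases h : x ∈ C
    · exact Or.inr ⟨hx, h⟩
    · exact Or.inl ⟨hx, h⟩
  exact ν.lad_infinite hδdom ((h1.union h2).subset hsub)

lemma thin_aux (μ : Ladder) (B : Set Ordinal) (δ : Ordinal)
    (h : (μ.lad δ \ B).Infinite) : {k : ℕ | μ.toFun δ k ∉ B}.Infinite := by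
  apply Set.Infinite.of_image (μ.toFun δ)
  have himg : μ.toFun δ '' {k | μ.toFun δ k ∉ B} = μ.lad δ \ B := by
    ext x
    constructor
    · rintro ⟨k, hk, rfl⟩; exact ⟨⟨k, rfl⟩, hk⟩
    · rintro ⟨⟨k, rfl⟩, hx⟩; exact ⟨k, hx, rfl⟩
  rwa [himg]

/-- The thinned-out ladder: on those `δ ∈ dom(μ̄) ∩ W` where `[μ_δ] \ B δ` is
infinite, enumerate `[μ_δ] \ B δ`. -/
noncomputable def Ladder.thin (μ : Ladder) (W : Set Ordinal)
    (B : Ordinal → Set Ordinal) : Ladder where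
  dom := {δ | δ ∈ μ.dom ∧ δ ∈ W ∧ (μ.lad δ \ B δ).Infinite}
  toFun := fun δ n => μ.toFun δ (Nat.nth (fun k => μ.toFun δ k ∉ B δ) n)
  dom_lt := fun δ h => μ.dom_lt δ h.1
  mono := fun δ h =>
    (μ.mono δ h.1).comp (Nat.nth_strictMono (thin_aux μ (B δ) δ h.2.2))
  lt := fun δ h _ => μ.lt δ h.1 _
  cofinal := fun δ h a ha => by
    obtain ⟨n, hn⟩ := μ.cofinal δ h.1 a ha
    exact ⟨n, lt_of_lt_of_le hn ((μ.mono δ h.1).monotone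
      (Nat.nth_strictMono (thin_aux μ (B δ) δ h.2.2)).le_apply)⟩

lemma Ladder.thin_lad (μ : Ladder) (W : Set Ordinal) (B : Ordinal → Set Ordinal)
    {δ : Ordinal} (h : δ ∈ (μ.thin W B).dom) :
    (μ.thin W B).lad δ ⊆ μ.lad δ \ B δ := by
  rintro x ⟨n, rfl⟩
  exact ⟨⟨_, rfl⟩, Nat.nth_mem_of_infinite (thin_aux μ (B δ) δ h.2.2) n⟩

/-- The even part of a ladder. -/
def Ladder.evens (μ : Ladder) : Ladder where
  dom := μ.dom
  toFun := fun δ n => μ.toFun δ (2 * n)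
  dom_lt := μ.dom_lt
  mono := fun δ h => (μ.mono δ h).comp (fun a b hab => by omega)
  lt := fun δ h _ => μ.lt δ h _
  cofinal := fun δ h a ha => by
    obtain ⟨n, hn⟩ := μ.cofinal δ h a ha
    exact ⟨n, lt_of_lt_of_le hn ((μ.mono δ h).monotone (by omega))⟩

lemma Ladder.evens_lad_subset (μ : Ladder) (δ : Ordinal) :
    μ.evens.lad δ ⊆ μ.lad δ := by
  rintro x ⟨n, rfl⟩
  exact ⟨2 * n, rfl⟩

lemma Ladder.evens_diff_infinite (μ : Ladder) {δ : Ordinal} (h : δ ∈ μ.dom) :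
    (μ.lad δ \ μ.evens.lad δ).Infinite := by
  have hsub : Set.range (fun n => μ.toFun δ (2 * n + 1)) ⊆
      μ.lad δ \ μ.evens.lad δ := by
    rintro x ⟨n, rfl⟩
    refine ⟨⟨2 * n + 1, rfl⟩, ?_⟩
    rintro ⟨m, hm⟩
    have := (μ.mono δ h).injective hm
    omega
  refine (Set.infinite_range_of_injective ?_).mono hsub
  intro a b hab
  have := (μ.mono δ h).injective hab
  omega

/-- Lemma 2.1(4): under A1–A5, the domain of any strongly club-guessing ladder
is S̄-small. -/
theorem stmt14 (S : Ordinal → Set Ordinal) (η : Ladder) (χ : Ordinal → Ladder)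
    (hA : CondA S η χ) (μ : Ladder) (hμ : StronglyGuessing μ) :
    SSmall S μ.dom := by
  by_contra hsmall
  obtain ⟨hS, hSd, hA1, hA2, hA3, hA4, hA5⟩ := hA
  -- Step 1: μ.dom \ η.dom is nonstationary.
  have step1 : ∃ E, IsClubOmegaOne E ∧ (μ.restrict η.domᶜ).dom ∩ E = ∅ := by
    have hνg : StronglyGuessing (μ.restrict η.domᶜ) :=
      hμ.of_sub _ (fun δ h => h.1) (fun δ _ => subset_rfl)
    have hνad : AlmostDisjoint (μ.restrict η.domᶜ) η :=
      ⟨omegaOneSet, isClub_omegaOneSet, fun δ hδ => absurd hδ.2.2 hδ.2.1.2⟩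
    have h1 := hνg.not_stationary (hA2 _ hνad)
    exact not_stationary_iff h1
  obtain ⟨E₁, hE₁, hE₁e⟩ := step1
  -- Step 2: the set of δ ∈ μ.dom with [μ_δ] \ [η_δ] infinite is nonstationary.
  have step2 : ∃ E, IsClubOmegaOne E ∧ (μ.thin Set.univ η.lad).dom ∩ E = ∅ := by
    have hσg : StronglyGuessing (μ.thin Set.univ η.lad) :=
      hμ.of_sub _ (fun δ h => h.1) (fun δ h x hx => (μ.thin_lad _ _ h hx).1)
    have hσad : AlmostDisjoint (μ.thin Set.univ η.lad) η := by
      refine ⟨omegaOneSet, isClub_omegaOneSet, fun δ hδ => ?_⟩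
      refine Set.finite_empty.subset (fun x hx => ?_)
      exact (μ.thin_lad _ _ hδ.2.1 hx.1).2 hx.2
    have h1 := hσg.not_stationary (hA2 _ hσad)
    exact not_stationary_iff h1
  obtain ⟨E₂, hE₂, hE₂e⟩ := step2
  -- Hence the even part of μ is a subladder of η.
  have hsub : Subladder μ.evens η := by
    refine ⟨E₁ ∩ E₂, hE₁.inter hE₂, ?_, ?_⟩
    · intro δ hδ
      by_contra hcon
      exact (eq_empty_iff_forall_notMem.1 hE₁e δ)
        ⟨(⟨hδ.2, hcon⟩ : δ ∈ μ.dom ∩ η.domᶜ), hδ.1.1⟩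
    · intro δ hδ
      have hnot : δ ∉ (μ.thin Set.univ η.lad).dom := fun h =>
        (eq_empty_iff_forall_notMem.1 hE₂e δ) ⟨h, hδ.1.2⟩
      have hfin : (μ.lad δ \ η.lad δ).Finite := by
        by_contra hinf
        exact hnot ⟨hδ.2, Set.mem_univ δ, hinf⟩
      exact hfin.subset (diff_subset_diff_left (μ.evens_lad_subset δ))
  -- Apply A5 to X = μ.dom and ρ = μ.evens.
  obtain ⟨i, hi, hSiX, C₀, hC₀, _, hC₀lad⟩ :=
    hA5 μ.dom (fun δ h => μ.dom_lt δ h) hsmall μ.evens rfl hsub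
  -- Step 3: the set of δ ∈ S i with [μ_δ] \ [χ_i δ] infinite is nonstationary.
  have step3 : ∃ E, IsClubOmegaOne E ∧ (μ.thin (S i) (χ i).lad).dom ∩ E = ∅ := by
    have hτg : StronglyGuessing (μ.thin (S i) (χ i).lad) :=
      hμ.of_sub _ (fun δ h => h.1) (fun δ h x hx => (μ.thin_lad _ _ h hx).1)
    have hτad : AlmostDisjoint (μ.thin (S i) (χ i).lad) (χ i) := by
      refine ⟨omegaOneSet, isClub_omegaOneSet, fun δ hδ => ?_⟩
      refine Set.finite_empty.subset (fun x hx => ?_)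
      exact (μ.thin_lad _ _ hδ.2.1 hx.1).2 hx.2
    have hτav : Avoidable (μ.thin (S i) (χ i).lad) :=
      (hA3 i hi).2.2.2 _ (fun δ h => h.2.1) hτad
    have h1 := hτg.not_stationary hτav
    exact not_stationary_iff h1
  obtain ⟨E₃, hE₃, hE₃e⟩ := step3
  -- Find a point of S i in C₀ ∩ E₃ and derive a contradiction.
  obtain ⟨δ, hδS, hδC₀, hδE₃⟩ := (hS i hi).2 (C₀ ∩ E₃) (hC₀.inter hE₃)
  have hδX : δ ∈ μ.dom := hSiX hδS
  have h2 : (μ.lad δ \ (χ i).lad δ).Finite := by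
    by_contra hinf
    exact (eq_empty_iff_forall_notMem.1 hE₃e δ)
      ⟨⟨hδX, hδS, hinf⟩, hδE₃⟩
  have h1 : ((χ i).lad δ \ μ.evens.lad δ).Finite :=
    hC₀lad δ ⟨hδC₀, by rw [(hA3 i hi).1]; exact hδS⟩
  have h3 : (μ.lad δ \ μ.evens.lad δ).Infinite := μ.evens_diff_infinite hδX
  have hsplit : μ.lad δ \ μ.evens.lad δ ⊆
      (μ.lad δ \ (χ i).lad δ) ∪ ((χ i).lad δ \ μ.evens.lad δ) := by
    rintro x ⟨hxμ, hxe⟩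
    by_cases h : x ∈ (χ i).lad δ
    · exact Or.inr ⟨h, hxe⟩
    · exact Or.inl ⟨hxμ, h⟩
  exact h3 ((h2.union h1).subset hsplit)
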